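/- arXiv:1903.12002 — 4 statements merged into one kernel-verified Lean document; each statement's English description precedes it below -/
import Mathlib

section
/- Suppose h₀·W ⊆ W' and h₀·U ⊆ U', and suppose both evaluation maps ψ : W/U → ℂ^δ (defined using h) and ψ' : W'/U' → ℂ^δ (defined using hh₀) are isomorphisms. Then the multiplication map M_{h₀} : W/U → W'/U' sending f + U to h₀f + U' is a well-defined isomorphism of ℂ-vector spaces. -/
open MvPolynomial

/-! The multiplication map is forced to be `ψ'⁻¹ ∘ ψ`: evaluating `h₀ f` against `h h₀` gives
the same values as evaluating `f` against `h`, so `ψ' (h₀ f + U') = ψ (f + U)`. Defining the map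
as `ψ'⁻¹ ∘ ψ` makes it well defined and bijective at once. -/

theorem MvPolynomial.eval_mul_div_eval_mul {σ K : Type*} [Field K] (x : σ → K)
    (f g c : MvPolynomial σ K) (hc : eval x c ≠ 0) :
    eval x (c * f) / eval x (g * c) = eval x f / eval x g := by
  rw [map_mul, map_mul, mul_comm (eval x g)]
  exact mul_div_mul_left _ _ hc

theorem LinearMap.exists_bijective_comp_eq {R M M' V : Type*} [Semiring R]
    [AddCommMonoid M] [AddCommMonoid M'] [AddCommMonoid V]
    [Module R M] [Module R M'] [Module R V]
    {ψ : M →ₗ[R] V} {ψ' : M' →ₗ[R] V} (hψ : Function.Bijective ψ)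
    (hψ' : Function.Bijective ψ') :
    ∃ T : M →ₗ[R] M', ψ' ∘ₗ T = ψ ∧ Function.Bijective T := by
  let e' := LinearEquiv.ofBijective ψ' hψ'
  refine ⟨e'.symm.toLinearMap ∘ₗ ψ, ?_, e'.symm.bijective.comp hψ⟩
  ext m
  exact e'.apply_symm_apply (ψ m)

theorem mulMap_isomorphism_general (k δ : ℕ) (z : Fin δ → (Fin k → ℂ))
    (W W' : Submodule ℂ (MvPolynomial (Fin k) ℂ))
    (U : Submodule ℂ W)
    (U' : Submodule ℂ W')
    (h : MvPolynomial (Fin k) ℂ)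
    (h₀ : MvPolynomial (Fin k) ℂ) (hh₀ : ∀ j, eval (z j) h₀ ≠ 0)
    (hmulW : ∀ f ∈ W, h₀ * f ∈ W')
    (ψ : (W ⧸ U) →ₗ[ℂ] (Fin δ → ℂ))
    (hψ : ∀ f : W, ψ (Submodule.Quotient.mk f) =
      fun j => eval (z j) (f : MvPolynomial (Fin k) ℂ) / eval (z j) h)
    (hψbij : Function.Bijective ψ)
    (ψ' : (W' ⧸ U') →ₗ[ℂ] (Fin δ → ℂ))
    (hψ' : ∀ f : W', ψ' (Submodule.Quotient.mk f) =
      fun j => eval (z j) (f : MvPolynomial (Fin k) ℂ) / eval (z j) (h * h₀))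
    (hψ'bij : Function.Bijective ψ') :
    ∃ Mh₀ : (W ⧸ U) →ₗ[ℂ] (W' ⧸ U'),
      (∀ f : W, Mh₀ (Submodule.Quotient.mk f) =
        Submodule.Quotient.mk (⟨h₀ * (f : MvPolynomial (Fin k) ℂ), hmulW _ f.2⟩ : W')) ∧
      Function.Bijective Mh₀ := by
  obtain ⟨T, hT, hTbij⟩ := LinearMap.exists_bijective_comp_eq hψbij hψ'bij
  refine ⟨T, fun f => hψ'bij.injective ?_, hTbij⟩
  rw [← LinearMap.comp_apply, hT, hψ, hψ']
  funext j
  exact (eval_mul_div_eval_mul (z j) _ _ _ (hh₀ j)).symm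

/-- If `h₀·W ⊆ W'`, `h₀·U ⊆ U'`, and both evaluation maps `ψ : W/U → ℂ^δ`
(defined using `h`) and `ψ' : W'/U' → ℂ^δ` (defined using `hh₀`) are
isomorphisms, then the multiplication map `M_{h₀} : W/U → W'/U'`,
`f + U ↦ h₀f + U'`, is a well-defined isomorphism of `ℂ`-vector spaces. -/
theorem mulMap_isomorphism (k δ : ℕ) (z : Fin δ → (Fin k → ℂ))
    (W W' : Submodule ℂ (MvPolynomial (Fin k) ℂ))
    [FiniteDimensional ℂ W] [FiniteDimensional ℂ W']
    (JW : Submodule ℂ W)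
    (hJW : ∀ f : W, f ∈ JW ↔ ∀ j, eval (z j) (f : MvPolynomial (Fin k) ℂ) = 0)
    (JW' : Submodule ℂ W')
    (hJW' : ∀ f : W', f ∈ JW' ↔ ∀ j, eval (z j) (f : MvPolynomial (Fin k) ℂ) = 0)
    (U : Submodule ℂ W) (hU : U ≤ JW)
    (U' : Submodule ℂ W') (hU' : U' ≤ JW')
    (h : MvPolynomial (Fin k) ℂ) (hhW : h ∈ W) (hh : ∀ j, eval (z j) h ≠ 0)
    (h₀ : MvPolynomial (Fin k) ℂ) (hh₀ : ∀ j, eval (z j) h₀ ≠ 0)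
    (hmulW : ∀ f ∈ W, h₀ * f ∈ W')
    (hmulU : ∀ f : W, f ∈ U →
      (⟨h₀ * (f : MvPolynomial (Fin k) ℂ), hmulW _ f.2⟩ : W') ∈ U')
    (ψ : (W ⧸ U) →ₗ[ℂ] (Fin δ → ℂ))
    (hψ : ∀ f : W, ψ (Submodule.Quotient.mk f) =
      fun j => eval (z j) (f : MvPolynomial (Fin k) ℂ) / eval (z j) h)
    (hψbij : Function.Bijective ψ)
    (ψ' : (W' ⧸ U') →ₗ[ℂ] (Fin δ → ℂ))
    (hψ' : ∀ f : W', ψ' (Submodule.Quotient.mk f) =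
      fun j => eval (z j) (f : MvPolynomial (Fin k) ℂ) / eval (z j) (h * h₀))
    (hψ'bij : Function.Bijective ψ') :
    ∃ Mh₀ : (W ⧸ U) →ₗ[ℂ] (W' ⧸ U'),
      (∀ f : W, Mh₀ (Submodule.Quotient.mk f) =
        Submodule.Quotient.mk (⟨h₀ * (f : MvPolynomial (Fin k) ℂ), hmulW _ f.2⟩ : W')) ∧
      Function.Bijective Mh₀ :=
  mulMap_isomorphism_general k δ z W W' U U' h h₀ hh₀ hmulW ψ hψ hψbij ψ' hψ' hψ'bij
end

section
/- Suppose h₀·W ⊆ W', h₀·U ⊆ U', g·W ⊆ W', g·U ⊆ U', and suppose both evaluation maps ψ : W/U → ℂ^δ (defined using h) and ψ' : W'/U' → ℂ^δ (defined using hh₀) are isomorphisms. Let ℓ₁,…,ℓ_δ be a set of homogeneous Lagrange polynomials in W with respect to h. Then for every j ∈ {1,…,δ}, the class ℓ_j + U is nonzero in W/U and M_{g/h₀}(ℓ_j + U) = (g(z_j)/h₀(z_j)) · (ℓ_j + U); i.e. the δ right eigenpairs of the multiplication operator M_{g/h₀} : W/U → W/U are ((g/h₀)(z_j), ℓ_j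 + U), j = 1,…,δ. (Toric eigenvalue, eigenvector theorem, eigenvector part.) -/
/-!
The Lagrange polynomial `ℓ_j` vanishes at every `z_i` with `i ≠ j`, so `g ℓ_j` and
`(g(z_j)/h₀(z_j)) h₀ ℓ_j` take the same values at all the `z_i`. Since `ψ'` is injective, their
classes agree, i.e. `M_g (ℓ_j + U) = (g(z_j)/h₀(z_j)) M_{h₀} (ℓ_j + U)`, and applying the
injective `M_{h₀}` turns this into the eigenvalue equation for `M_{g/h₀}`. The class `ℓ_j + U` is
nonzero because the `j`-th coordinate of its image under `ψ` is `h(z_j)/h(z_j) = 1`.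
-/

open MvPolynomial

namespace Module.End

variable {R M N : Type*} [CommRing R] [AddCommGroup M] [Module R M] [AddCommGroup N] [Module R N]

theorem hasEigenvector_of_injective_of_comp_eq {T : Module.End R M} {A B : M →ₗ[R] N}
    (hA : Function.Injective A) (hT : ∀ x, A (T x) = B x) {c : R} {x : M}
    (hx : B x = c • A x) (hx0 : x ≠ 0) : T.HasEigenvector c x :=
  ⟨mem_eigenspace_iff.mpr <| hA <| by rw [hT, hx, map_smul], hx0⟩

end Module.End

section Evaluation

variable {σ ι K : Type*} [Field K] {z : ι → σ → K}

theorem eval_mul_eq_of_eval_eq_zero {ℓ : MvPolynomial σ K} {j : ι}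
    (hℓ : ∀ i, i ≠ j → eval (z i) ℓ = 0) (p : MvPolynomial σ K) {q : MvPolynomial σ K}
    (hq : eval (z j) q ≠ 0) (i : ι) :
    eval (z i) (p * ℓ) = eval (z j) p / eval (z j) q * eval (z i) (q * ℓ) := by
  by_cases hij : i = j
  · subst hij
    rw [map_mul, map_mul, div_mul_eq_mul_div, mul_div_assoc, mul_div_cancel_left₀ _ hq]
  · simp [hℓ i hij]

variable {W : Submodule K (MvPolynomial σ K)} {U : Submodule K W} {d : ι → K}
  {ψ : (W ⧸ U) →ₗ[K] (ι → K)}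

theorem mk_ne_zero_of_eval_ne_zero
    (hψ : ∀ f : W, ψ (Submodule.Quotient.mk f) = fun i => eval (z i) (f : MvPolynomial σ K) / d i)
    {f : W} {j : ι} (hf : eval (z j) (f : MvPolynomial σ K) ≠ 0) (hd : d j ≠ 0) :
    (Submodule.Quotient.mk f : W ⧸ U) ≠ 0 := by
  intro hf0
  have := congrFun (hψ f) j
  rw [hf0, map_zero, Pi.zero_apply, eq_comm, div_eq_zero_iff] at this
  exact this.elim hf hd

theorem mk_eq_mk_of_eval_eq
    (hψ : ∀ f : W, ψ (Submodule.Quotient.mk f) = fun i => eval (z i) (f : MvPolynomial σ K) / d i)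
    (hψinj : Function.Injective ψ) {f₁ f₂ : W}
    (hf : ∀ i, eval (z i) (f₁ : MvPolynomial σ K) = eval (z i) (f₂ : MvPolynomial σ K)) :
    (Submodule.Quotient.mk f₁ : W ⧸ U) = Submodule.Quotient.mk f₂ :=
  hψinj <| by rw [hψ, hψ]; simp only [hf]

end Evaluation

theorem toric_eigenvector_theorem_general (k δ : ℕ) (z : Fin δ → (Fin k → ℂ))
    (W W' : Submodule ℂ (MvPolynomial (Fin k) ℂ))
    (U : Submodule ℂ W)
    (U' : Submodule ℂ W')
    (h : MvPolynomial (Fin k) ℂ) (hh : ∀ j, eval (z j) h ≠ 0)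
    (h₀ g : MvPolynomial (Fin k) ℂ) (hh₀ : ∀ j, eval (z j) h₀ ≠ 0)
    (hmulW : ∀ f ∈ W, h₀ * f ∈ W')
    (hmulWg : ∀ f ∈ W, g * f ∈ W')
    (ψ : (W ⧸ U) →ₗ[ℂ] (Fin δ → ℂ))
    (hψ : ∀ f : W, ψ (Submodule.Quotient.mk f) =
      fun j => eval (z j) (f : MvPolynomial (Fin k) ℂ) / eval (z j) h)
    (ψ' : (W' ⧸ U') →ₗ[ℂ] (Fin δ → ℂ))
    (hψ' : ∀ f : W', ψ' (Submodule.Quotient.mk f) =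
      fun j => eval (z j) (f : MvPolynomial (Fin k) ℂ) / eval (z j) (h * h₀))
    (hψ'bij : Function.Bijective ψ')
    (ℓ : Fin δ → W)
    (hℓ0 : ∀ i j, i ≠ j → eval (z i) ((ℓ j : MvPolynomial (Fin k) ℂ)) = 0)
    (hℓ1 : ∀ j, eval (z j) ((ℓ j : MvPolynomial (Fin k) ℂ)) = eval (z j) h)
    (Mh₀ Mg : (W ⧸ U) →ₗ[ℂ] (W' ⧸ U'))
    (hMh₀ : ∀ f : W, Mh₀ (Submodule.Quotient.mk f) =
      Submodule.Quotient.mk (⟨h₀ * (f : MvPolynomial (Fin k) ℂ), hmulW _ f.2⟩ : W'))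
    (hMh₀bij : Function.Bijective Mh₀)
    (hMg : ∀ f : W, Mg (Submodule.Quotient.mk f) =
      Submodule.Quotient.mk (⟨g * (f : MvPolynomial (Fin k) ℂ), hmulWg _ f.2⟩ : W'))
    (Mgh₀ : Module.End ℂ (W ⧸ U))
    (hMgh₀ : ∀ x, Mh₀ (Mgh₀ x) = Mg x) :
    ∀ j, Module.End.HasEigenvector Mgh₀ (eval (z j) g / eval (z j) h₀)
      (Submodule.Quotient.mk (ℓ j)) := by
  intro j
  refine Module.End.hasEigenvector_of_injective_of_comp_eq hMh₀bij.injective hMgh₀ ?_ ?_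
  · rw [hMg, hMh₀, ← Submodule.Quotient.mk_smul]
    refine mk_eq_mk_of_eval_eq hψ' hψ'bij.injective fun i => ?_
    simpa using eval_mul_eq_of_eval_eq_zero (hℓ0 · j) g (hh₀ j) i
  · exact mk_ne_zero_of_eval_ne_zero hψ (hℓ1 j ▸ hh j) (hh j)

/-- Toric eigenvalue, eigenvector theorem (right eigenpairs): with `h₀·W ⊆ W'`,
`h₀·U ⊆ U'`, `g·W ⊆ W'`, `g·U ⊆ U'`, both evaluation maps `ψ : W/U → ℂ^δ`
(using `h`) and `ψ' : W'/U' → ℂ^δ` (using `hh₀`) isomorphisms, and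
`ℓ₁,…,ℓ_δ` a set of homogeneous Lagrange polynomials in `W` with respect to
`h`, for every `j` the class `ℓ_j + U` is nonzero in `W/U` and
`M_{g/h₀}(ℓ_j + U) = (g(z_j)/h₀(z_j))·(ℓ_j + U)`, where
`M_{g/h₀} = M_{h₀}⁻¹ ∘ M_g : W/U → W/U`. -/
theorem toric_eigenvector_theorem (k δ : ℕ) (z : Fin δ → (Fin k → ℂ))
    (W W' : Submodule ℂ (MvPolynomial (Fin k) ℂ))
    [FiniteDimensional ℂ W] [FiniteDimensional ℂ W']
    (JW : Submodule ℂ W)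
    (hJW : ∀ f : W, f ∈ JW ↔ ∀ j, eval (z j) (f : MvPolynomial (Fin k) ℂ) = 0)
    (JW' : Submodule ℂ W')
    (hJW' : ∀ f : W', f ∈ JW' ↔ ∀ j, eval (z j) (f : MvPolynomial (Fin k) ℂ) = 0)
    (U : Submodule ℂ W) (hU : U ≤ JW)
    (U' : Submodule ℂ W') (hU' : U' ≤ JW')
    (h : MvPolynomial (Fin k) ℂ) (hhW : h ∈ W) (hh : ∀ j, eval (z j) h ≠ 0)
    (h₀ g : MvPolynomial (Fin k) ℂ) (hh₀ : ∀ j, eval (z j) h₀ ≠ 0)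
    (hmulW : ∀ f ∈ W, h₀ * f ∈ W')
    (hmulU : ∀ f : W, f ∈ U →
      (⟨h₀ * (f : MvPolynomial (Fin k) ℂ), hmulW _ f.2⟩ : W') ∈ U')
    (hmulWg : ∀ f ∈ W, g * f ∈ W')
    (hmulUg : ∀ f : W, f ∈ U →
      (⟨g * (f : MvPolynomial (Fin k) ℂ), hmulWg _ f.2⟩ : W') ∈ U')
    (ψ : (W ⧸ U) →ₗ[ℂ] (Fin δ → ℂ))
    (hψ : ∀ f : W, ψ (Submodule.Quotient.mk f) =
      fun j => eval (z j) (f : MvPolynomial (Fin k) ℂ) / eval (z j) h)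
    (hψbij : Function.Bijective ψ)
    (ψ' : (W' ⧸ U') →ₗ[ℂ] (Fin δ → ℂ))
    (hψ' : ∀ f : W', ψ' (Submodule.Quotient.mk f) =
      fun j => eval (z j) (f : MvPolynomial (Fin k) ℂ) / eval (z j) (h * h₀))
    (hψ'bij : Function.Bijective ψ')
    (ℓ : Fin δ → W)
    (hℓ0 : ∀ i j, i ≠ j → eval (z i) ((ℓ j : MvPolynomial (Fin k) ℂ)) = 0)
    (hℓ1 : ∀ j, eval (z j) ((ℓ j : MvPolynomial (Fin k) ℂ)) = eval (z j) h)
    (Mh₀ Mg : (W ⧸ U) →ₗ[ℂ] (W' ⧸ U'))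
    (hMh₀ : ∀ f : W, Mh₀ (Submodule.Quotient.mk f) =
      Submodule.Quotient.mk (⟨h₀ * (f : MvPolynomial (Fin k) ℂ), hmulW _ f.2⟩ : W'))
    (hMh₀bij : Function.Bijective Mh₀)
    (hMg : ∀ f : W, Mg (Submodule.Quotient.mk f) =
      Submodule.Quotient.mk (⟨g * (f : MvPolynomial (Fin k) ℂ), hmulWg _ f.2⟩ : W'))
    (Mgh₀ : Module.End ℂ (W ⧸ U))
    (hMgh₀ : ∀ x, Mh₀ (Mgh₀ x) = Mg x) :
    ∀ j, Module.End.HasEigenvector Mgh₀ (eval (z j) g / eval (z j) h₀)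
      (Submodule.Quotient.mk (ℓ j)) :=
  toric_eigenvector_theorem_general k δ z W W' U U' h hh h₀ g hh₀ hmulW hmulWg ψ hψ ψ' hψ' hψ'bij ℓ
    hℓ0 hℓ1 Mh₀ Mg hMh₀ hMh₀bij hMg Mgh₀ hMgh₀
end

section
/- Suppose h₀·W ⊆ W', h₀·U ⊆ U', g·W ⊆ W', g·U ⊆ U', and suppose both evaluation maps ψ : W/U → ℂ^δ (defined using h) and ψ' : W'/U' → ℂ^δ (defined using hh₀) are isomorphisms. For each j define the functional v_j : W/U → ℂ by v_j(f + U) = f(z_j)/h(z_j). Then for every j ∈ {1,…,δ}, v_j is nonzero and v_j ∘ M_{g/h₀} = (g(z_j)/h₀(z_j)) · v_j; i.e. the δ left eigenpairs of the multiplication operator M_{g/h₀} : W/U → W/U are (v_j, (g/h₀)(z_j)), j = 1,…,δ. (Toric eigenvalue, eigenvector theorem, left eigenvector part.) -/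
open MvPolynomial

/-!
Let `w_j` be the `j`-th coordinate of `ψ'`, i.e. evaluation at `z_j` divided by `(h h₀)(z_j)`.
Then `w_j ∘ M_{h₀} = v_j` and `w_j ∘ M_g = (g/h₀)(z_j) • v_j`, so composing
`M_{h₀} ∘ M_{g/h₀} = M_g` with `w_j` gives the eigen-equation. Nonvanishing holds since `v_j(h + U) = 1`.
-/

theorem LinearMap.comp_eq_smul_of_comp_eq {R M N P : Type*} [CommSemiring R]
    [AddCommMonoid M] [AddCommMonoid N] [AddCommMonoid P]
    [Module R M] [Module R N] [Module R P]
    {v : M →ₗ[R] P} {w : N →ₗ[R] P} {A B : M →ₗ[R] N} {T : M →ₗ[R] M} {c : R}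
    (hA : w ∘ₗ A = v) (hB : w ∘ₗ B = c • v) (hT : A ∘ₗ T = B) :
    v ∘ₗ T = c • v := by
  rw [← hA, LinearMap.comp_assoc, hT, hB, hA]

theorem toric_left_eigenvector_theorem_general (k δ : ℕ) (z : Fin δ → (Fin k → ℂ))
    (W W' : Submodule ℂ (MvPolynomial (Fin k) ℂ))
    (U : Submodule ℂ W)
    (U' : Submodule ℂ W')
    (h : MvPolynomial (Fin k) ℂ) (hhW : h ∈ W) (hh : ∀ j, eval (z j) h ≠ 0)
    (h₀ g : MvPolynomial (Fin k) ℂ) (hh₀ : ∀ j, eval (z j) h₀ ≠ 0)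
    (hmulW : ∀ f ∈ W, h₀ * f ∈ W')
    (hmulWg : ∀ f ∈ W, g * f ∈ W')
    (ψ' : (W' ⧸ U') →ₗ[ℂ] (Fin δ → ℂ))
    (hψ' : ∀ f : W', ψ' (Submodule.Quotient.mk f) =
      fun j => eval (z j) (f : MvPolynomial (Fin k) ℂ) / eval (z j) (h * h₀))
    (Mh₀ Mg : (W ⧸ U) →ₗ[ℂ] (W' ⧸ U'))
    (hMh₀ : ∀ f : W, Mh₀ (Submodule.Quotient.mk f) =
      Submodule.Quotient.mk (⟨h₀ * (f : MvPolynomial (Fin k) ℂ), hmulW _ f.2⟩ : W'))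
    (hMg : ∀ f : W, Mg (Submodule.Quotient.mk f) =
      Submodule.Quotient.mk (⟨g * (f : MvPolynomial (Fin k) ℂ), hmulWg _ f.2⟩ : W'))
    (Mgh₀ : Module.End ℂ (W ⧸ U))
    (hMgh₀ : ∀ x, Mh₀ (Mgh₀ x) = Mg x)
    (v : Fin δ → ((W ⧸ U) →ₗ[ℂ] ℂ))
    (hv : ∀ j, ∀ f : W, v j (Submodule.Quotient.mk f) =
      eval (z j) (f : MvPolynomial (Fin k) ℂ) / eval (z j) h) :
    ∀ j, v j ≠ 0 ∧ (v j) ∘ₗ Mgh₀ = (eval (z j) g / eval (z j) h₀) • v j := by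
  intro j
  have hv_h : v j (Submodule.Quotient.mk ⟨h, hhW⟩) = 1 := by rw [hv, div_self (hh j)]
  let w : (W' ⧸ U') →ₗ[ℂ] ℂ := LinearMap.proj j ∘ₗ ψ'
  have hw_h₀ : w ∘ₗ Mh₀ = v j := by
    refine Submodule.linearMap_qext _ (LinearMap.ext fun f => ?_)
    simp only [w, LinearMap.comp_apply, Submodule.mkQ_apply, hMh₀, hψ', hv,
      LinearMap.coe_proj, Function.eval, map_mul]
    field_simp [hh j, hh₀ j]
  have hw_g : w ∘ₗ Mg = (eval (z j) g / eval (z j) h₀) • v j := by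
    refine Submodule.linearMap_qext _ (LinearMap.ext fun f => ?_)
    simp only [w, LinearMap.comp_apply, LinearMap.smul_apply, Submodule.mkQ_apply, hMg, hψ',
      hv, LinearMap.coe_proj, Function.eval, map_mul, smul_eq_mul]
    field_simp [hh j, hh₀ j]
  refine ⟨fun hzero => by simp [hzero] at hv_h, ?_⟩
  exact LinearMap.comp_eq_smul_of_comp_eq hw_h₀ hw_g (LinearMap.ext hMgh₀)

/-- Toric eigenvalue, eigenvector theorem (left eigenpairs): with `h₀·W ⊆ W'`,
`h₀·U ⊆ U'`, `g·W ⊆ W'`, `g·U ⊆ U'`, and both evaluation maps `ψ : W/U → ℂ^δ`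
(using `h`) and `ψ' : W'/U' → ℂ^δ` (using `hh₀`) isomorphisms, for every `j`
the functional `v_j : W/U → ℂ`, `f + U ↦ f(z_j)/h(z_j)`, is nonzero and
satisfies `v_j ∘ M_{g/h₀} = (g(z_j)/h₀(z_j))·v_j`, where
`M_{g/h₀} = M_{h₀}⁻¹ ∘ M_g : W/U → W/U`. -/
theorem toric_left_eigenvector_theorem (k δ : ℕ) (z : Fin δ → (Fin k → ℂ))
    (W W' : Submodule ℂ (MvPolynomial (Fin k) ℂ))
    [FiniteDimensional ℂ W] [FiniteDimensional ℂ W']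
    (JW : Submodule ℂ W)
    (hJW : ∀ f : W, f ∈ JW ↔ ∀ j, eval (z j) (f : MvPolynomial (Fin k) ℂ) = 0)
    (JW' : Submodule ℂ W')
    (hJW' : ∀ f : W', f ∈ JW' ↔ ∀ j, eval (z j) (f : MvPolynomial (Fin k) ℂ) = 0)
    (U : Submodule ℂ W) (hU : U ≤ JW)
    (U' : Submodule ℂ W') (hU' : U' ≤ JW')
    (h : MvPolynomial (Fin k) ℂ) (hhW : h ∈ W) (hh : ∀ j, eval (z j) h ≠ 0)
    (h₀ g : MvPolynomial (Fin k) ℂ) (hh₀ : ∀ j, eval (z j) h₀ ≠ 0)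
    (hmulW : ∀ f ∈ W, h₀ * f ∈ W')
    (hmulU : ∀ f : W, f ∈ U →
      (⟨h₀ * (f : MvPolynomial (Fin k) ℂ), hmulW _ f.2⟩ : W') ∈ U')
    (hmulWg : ∀ f ∈ W, g * f ∈ W')
    (hmulUg : ∀ f : W, f ∈ U →
      (⟨g * (f : MvPolynomial (Fin k) ℂ), hmulWg _ f.2⟩ : W') ∈ U')
    (ψ : (W ⧸ U) →ₗ[ℂ] (Fin δ → ℂ))
    (hψ : ∀ f : W, ψ (Submodule.Quotient.mk f) =
      fun j => eval (z j) (f : MvPolynomial (Fin k) ℂ) / eval (z j) h)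
    (hψbij : Function.Bijective ψ)
    (ψ' : (W' ⧸ U') →ₗ[ℂ] (Fin δ → ℂ))
    (hψ' : ∀ f : W', ψ' (Submodule.Quotient.mk f) =
      fun j => eval (z j) (f : MvPolynomial (Fin k) ℂ) / eval (z j) (h * h₀))
    (hψ'bij : Function.Bijective ψ')
    (Mh₀ Mg : (W ⧸ U) →ₗ[ℂ] (W' ⧸ U'))
    (hMh₀ : ∀ f : W, Mh₀ (Submodule.Quotient.mk f) =
      Submodule.Quotient.mk (⟨h₀ * (f : MvPolynomial (Fin k) ℂ), hmulW _ f.2⟩ : W'))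
    (hMh₀bij : Function.Bijective Mh₀)
    (hMg : ∀ f : W, Mg (Submodule.Quotient.mk f) =
      Submodule.Quotient.mk (⟨g * (f : MvPolynomial (Fin k) ℂ), hmulWg _ f.2⟩ : W'))
    (Mgh₀ : Module.End ℂ (W ⧸ U))
    (hMgh₀ : ∀ x, Mh₀ (Mgh₀ x) = Mg x)
    (v : Fin δ → ((W ⧸ U) →ₗ[ℂ] ℂ))
    (hv : ∀ j, ∀ f : W, v j (Submodule.Quotient.mk f) =
      eval (z j) (f : MvPolynomial (Fin k) ℂ) / eval (z j) h) :
    ∀ j, v j ≠ 0 ∧ (v j) ∘ₗ Mgh₀ = (eval (z j) g / eval (z j) h₀) • v j :=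
  toric_left_eigenvector_theorem_general k δ z W W' U U' h hhW hh h₀ g hh₀ hmulW hmulWg ψ' hψ' Mh₀
    Mg hMh₀ hMg Mgh₀ hMgh₀ v hv
end

section
/- Suppose h₀·W ⊆ W', h₀·U ⊆ U', and suppose both evaluation maps ψ : W/U → ℂ^δ (defined using h) and ψ' : W'/U' → ℂ^δ (defined using hh₀) are isomorphisms; in particular dim_ℂ(W/U) = dim_ℂ(W'/U') = δ. Let N : W' → ℂ^δ be a surjective linear map with ker N = U', let N_{h₀} : W → ℂ^δ be the map f ↦ N(h₀f), let B ⊆ W be a subspace such that the restriction N* := (N_{h₀})|_B : B → ℂ^δ is bijective. Then: (i) the map ν : B → W/U sending b to b + U is an isomorphism of ℂ-vector spaces; (ii) for any polynomial g with g·W ⊆ W' and g·U ⊆ U', setting N_g : B → ℂ^δ, f ↦ N(gf), one has ν ∘ (N*)^{-1} ∘ N_g = M_{g/h₀} ∘ ν, where M_{g/h₀} := M_{h₀}^{-1} ∘ M_g : W/U → W/U. -/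
/-!
`N` vanishes exactly on `U'`, so it descends to an injective map `N̄ : W'/U' → ℂ^δ`, and
`φ := N̄ ∘ M_{h₀}` is injective on `W/U`. Along `ν` this `φ` is the bijection `N*`, which forces `ν`
to be bijective with `ν ∘ N*⁻¹ ∘ φ = id`. Evaluating at `M_{g/h₀}(ν b)`, whose image under `φ` is
`N̄ (M_g (ν b)) = N_g b`, gives the commutation rule.
-/

open MvPolynomial

namespace Function.Injective

variable {α β γ : Type*} {φ : α → β} {ν : γ → α} {e : γ ≃ β}

theorem bijective_of_comp_eq_equiv (hφ : Injective φ) (he : ∀ c, φ (ν c) = e c) :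
    Bijective ν :=
  Bijective.of_comp_left (by simpa only [comp_def, he] using e.bijective) hφ

theorem apply_equiv_symm_of_comp_eq_equiv (hφ : Injective φ) (he : ∀ c, φ (ν c) = e c)
    (a : α) : ν (e.symm (φ a)) = a :=
  hφ (by rw [he, e.apply_symm_apply])

end Function.Injective

theorem multiplication_matrices_from_cokernel_general (k δ : ℕ)
    (W W' : Submodule ℂ (MvPolynomial (Fin k) ℂ))
    (U : Submodule ℂ W)
    (U' : Submodule ℂ W')
    (h₀ g : MvPolynomial (Fin k) ℂ)
    (hmulW : ∀ f ∈ W, h₀ * f ∈ W')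
    (hmulWg : ∀ f ∈ W, g * f ∈ W')
    (N : W' →ₗ[ℂ] (Fin δ → ℂ))
    (hNker : LinearMap.ker N = U')
    (B : Submodule ℂ W)
    (Nstar : B ≃ₗ[ℂ] (Fin δ → ℂ))
    (hNstar : ∀ b : B, Nstar b =
      N (⟨h₀ * ((b : W) : MvPolynomial (Fin k) ℂ), hmulW _ (b : W).2⟩ : W'))
    (Mh₀ Mg : (W ⧸ U) →ₗ[ℂ] (W' ⧸ U'))
    (hMh₀ : ∀ f : W, Mh₀ (Submodule.Quotient.mk f) =
      Submodule.Quotient.mk (⟨h₀ * (f : MvPolynomial (Fin k) ℂ), hmulW _ f.2⟩ : W'))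
    (hMh₀bij : Function.Bijective Mh₀)
    (hMg : ∀ f : W, Mg (Submodule.Quotient.mk f) =
      Submodule.Quotient.mk (⟨g * (f : MvPolynomial (Fin k) ℂ), hmulWg _ f.2⟩ : W'))
    (Mgh₀ : Module.End ℂ (W ⧸ U))
    (hMgh₀ : ∀ x, Mh₀ (Mgh₀ x) = Mg x) :
    Function.Bijective (fun b : B => (Submodule.Quotient.mk (b : W) : W ⧸ U)) ∧
      ∀ b : B,
        (Submodule.Quotient.mk
          ((Nstar.symm (N (⟨g * ((b : W) : MvPolynomial (Fin k) ℂ),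
            hmulWg _ (b : W).2⟩ : W')) : W)) : W ⧸ U) =
        Mgh₀ (Submodule.Quotient.mk (b : W)) := by
  let Nbar : (W' ⧸ U') →ₗ[ℂ] (Fin δ → ℂ) := U'.liftQ N hNker.ge
  have hφ : Function.Injective (Nbar ∘ Mh₀) :=
    (LinearMap.ker_eq_bot.mp (U'.ker_liftQ_eq_bot' N hNker.symm)).comp hMh₀bij.injective
  have hNstar_eq : ∀ b : B, (Nbar ∘ Mh₀) (Submodule.Quotient.mk (b : W)) = Nstar.toEquiv b :=
    fun b => by rw [Function.comp_apply, hMh₀, Submodule.liftQ_apply]; exact (hNstar b).symm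
  refine ⟨hφ.bijective_of_comp_eq_equiv hNstar_eq, fun b => ?_⟩
  have hNg : N ⟨g * ((b : W) : MvPolynomial (Fin k) ℂ), hmulWg _ (b : W).2⟩ =
      (Nbar ∘ Mh₀) (Mgh₀ (Submodule.Quotient.mk (b : W))) := by
    rw [Function.comp_apply, hMgh₀, hMg, Submodule.liftQ_apply]
  rw [hNg]
  exact hφ.apply_equiv_symm_of_comp_eq_equiv hNstar_eq _

/-- With `h₀·W ⊆ W'`, `h₀·U ⊆ U'`, both evaluation maps `ψ : W/U → ℂ^δ` (using
`h`) and `ψ' : W'/U' → ℂ^δ` (using `hh₀`) isomorphisms, `N : W' → ℂ^δ` a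
surjective linear map with `ker N = U'`, and `B ⊆ W` a subspace on which
`N* = (N_{h₀})|_B : B → ℂ^δ`, `f ↦ N(h₀f)`, is bijective: (i) the map
`ν : B → W/U`, `b ↦ b + U`, is an isomorphism of `ℂ`-vector spaces; and
(ii) for `g` with `g·W ⊆ W'` and `g·U ⊆ U'`, setting `N_g : B → ℂ^δ`,
`f ↦ N(gf)`, one has `ν ∘ (N*)⁻¹ ∘ N_g = M_{g/h₀} ∘ ν`, where
`M_{g/h₀} = M_{h₀}⁻¹ ∘ M_g : W/U → W/U`. -/
theorem multiplication_matrices_from_cokernel (k δ : ℕ) (z : Fin δ → (Fin k → ℂ))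
    (W W' : Submodule ℂ (MvPolynomial (Fin k) ℂ))
    [FiniteDimensional ℂ W] [FiniteDimensional ℂ W']
    (JW : Submodule ℂ W)
    (hJW : ∀ f : W, f ∈ JW ↔ ∀ j, eval (z j) (f : MvPolynomial (Fin k) ℂ) = 0)
    (JW' : Submodule ℂ W')
    (hJW' : ∀ f : W', f ∈ JW' ↔ ∀ j, eval (z j) (f : MvPolynomial (Fin k) ℂ) = 0)
    (U : Submodule ℂ W) (hU : U ≤ JW)
    (U' : Submodule ℂ W') (hU' : U' ≤ JW')
    (h : MvPolynomial (Fin k) ℂ) (hhW : h ∈ W) (hh : ∀ j, eval (z j) h ≠ 0)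
    (h₀ g : MvPolynomial (Fin k) ℂ) (hh₀ : ∀ j, eval (z j) h₀ ≠ 0)
    (hmulW : ∀ f ∈ W, h₀ * f ∈ W')
    (hmulU : ∀ f : W, f ∈ U →
      (⟨h₀ * (f : MvPolynomial (Fin k) ℂ), hmulW _ f.2⟩ : W') ∈ U')
    (hmulWg : ∀ f ∈ W, g * f ∈ W')
    (hmulUg : ∀ f : W, f ∈ U →
      (⟨g * (f : MvPolynomial (Fin k) ℂ), hmulWg _ f.2⟩ : W') ∈ U')
    (ψ : (W ⧸ U) →ₗ[ℂ] (Fin δ → ℂ))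
    (hψ : ∀ f : W, ψ (Submodule.Quotient.mk f) =
      fun j => eval (z j) (f : MvPolynomial (Fin k) ℂ) / eval (z j) h)
    (hψbij : Function.Bijective ψ)
    (ψ' : (W' ⧸ U') →ₗ[ℂ] (Fin δ → ℂ))
    (hψ' : ∀ f : W', ψ' (Submodule.Quotient.mk f) =
      fun j => eval (z j) (f : MvPolynomial (Fin k) ℂ) / eval (z j) (h * h₀))
    (hψ'bij : Function.Bijective ψ')
    (N : W' →ₗ[ℂ] (Fin δ → ℂ)) (hNsurj : Function.Surjective N)
    (hNker : LinearMap.ker N = U')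
    (B : Submodule ℂ W)
    (Nstar : B ≃ₗ[ℂ] (Fin δ → ℂ))
    (hNstar : ∀ b : B, Nstar b =
      N (⟨h₀ * ((b : W) : MvPolynomial (Fin k) ℂ), hmulW _ (b : W).2⟩ : W'))
    (Mh₀ Mg : (W ⧸ U) →ₗ[ℂ] (W' ⧸ U'))
    (hMh₀ : ∀ f : W, Mh₀ (Submodule.Quotient.mk f) =
      Submodule.Quotient.mk (⟨h₀ * (f : MvPolynomial (Fin k) ℂ), hmulW _ f.2⟩ : W'))
    (hMh₀bij : Function.Bijective Mh₀)
    (hMg : ∀ f : W, Mg (Submodule.Quotient.mk f) =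
      Submodule.Quotient.mk (⟨g * (f : MvPolynomial (Fin k) ℂ), hmulWg _ f.2⟩ : W'))
    (Mgh₀ : Module.End ℂ (W ⧸ U))
    (hMgh₀ : ∀ x, Mh₀ (Mgh₀ x) = Mg x) :
    Function.Bijective (fun b : B => (Submodule.Quotient.mk (b : W) : W ⧸ U)) ∧
      ∀ b : B,
        (Submodule.Quotient.mk
          ((Nstar.symm (N (⟨g * ((b : W) : MvPolynomial (Fin k) ℂ),
            hmulWg _ (b : W).2⟩ : W')) : W)) : W ⧸ U) =
        Mgh₀ (Submodule.Quotient.mk (b : W)) :=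
  multiplication_matrices_from_cokernel_general k δ W W' U U' h₀ g hmulW hmulWg N hNker B Nstar
    hNstar Mh₀ Mg hMh₀ hMh₀bij hMg Mgh₀ hMgh₀
end
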